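/- arXiv:1908.01426 — 2 statements merged into one kernel-verified Lean document; each statement's English description precedes it below -/
import Mathlib

section
/- For n even, the cyclic sequence obtained by listing p₁,…,p_{n/2} followed by p_n, p_{n-1},…,p_{n/2+1} requires at least C(n/2, 2) adjacent transpositions (in the cyclic sense, where the first and last positions are also adjacent) to be transformed into a cyclic rotation or reflection of the identity ordering p₁,…,p_n. -/
/-!
Chord `i < m` joins the labels `i` and `i + m`; count the pairs of chords whose endpoints,
placed at the positions the labels occupy, cross. In the starting configuration the chords are
nested, so no pair crosses. In a rotation or reflection of the identity every chord is a
diameter, so all `C(m, 2)` pairs cross. An adjacent transposition moves only the two endpoints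
at positions `k` and `k + 1`, which lie on at most two chords, so it changes the crossing status
of at most one pair.
-/

open Equiv Function Finset

namespace CyclicSwap

lemma eq_of_mem_chord {ι α : Type*} {p q : ι → α} (hpq : Injective (Sum.elim p q)) {x : α}
    {i j : ι} (hi : p i = x ∨ q i = x) (hj : p j = x ∨ q j = x) : i = j := by
  obtain ⟨hp, hq, hpq⟩ := Sum.elim_injective.mp hpq
  rcases hi with rfl | rfl <;> rcases hj with h | h
  · exact hp h.symm
  · exact absurd h.symm (hpq i j)
  · exact absurd h (hpq j i)
  · exact hq h.symm

lemma eq_or_eq_of_meets_pair {ι α : Type*} {p q : ι → α} (hpq : Injective (Sum.elim p q))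
    {x y : α} {i j l : ι} (hij : i ≠ j)
    (hi : p i ∈ ({x, y} : Set α) ∨ q i ∈ ({x, y} : Set α))
    (hj : p j ∈ ({x, y} : Set α) ∨ q j ∈ ({x, y} : Set α))
    (hl : p l ∈ ({x, y} : Set α) ∨ q l ∈ ({x, y} : Set α)) : l = i ∨ l = j := by
  have point {i : ι} (h : p i ∈ ({x, y} : Set α) ∨ q i ∈ ({x, y} : Set α)) :
      ∃ z ∈ ({x, y} : Set α), p i = z ∨ q i = z := by
    rcases h with h | h
    exacts [⟨p i, h, .inl rfl⟩, ⟨q i, h, .inr rfl⟩]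
  obtain ⟨u, hu, hiu⟩ := point hi
  obtain ⟨v, hv, hjv⟩ := point hj
  obtain ⟨w, hw, hlw⟩ := point hl
  have huv : u ≠ v := fun h => hij (eq_of_mem_chord hpq hiu (h ▸ hjv))
  have hwuv : w = u ∨ w = v := by
    simp only [Set.mem_insert_iff, Set.mem_singleton_iff] at hu hv hw
    grind
  rcases hwuv with rfl | rfl
  exacts [.inl (eq_of_mem_chord hpq hlw hiu), .inr (eq_of_mem_chord hpq hlw hjv)]

lemma labels_injective {n m : ℕ} (h : 2 * m ≤ n) :
    Injective (Sum.elim (fun i : Fin m => ((i : ℕ) : ZMod n))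
      fun i : Fin m => (i : ℕ) + (m : ZMod n)) := by
  have hlo (i : Fin m) : ((i : ℕ) : ZMod n).val = i := ZMod.val_cast_of_lt (by omega)
  have hhi (i : Fin m) : ((i : ℕ) + (m : ZMod n)).val = i + m := by
    rw [← Nat.cast_add, ZMod.val_cast_of_lt (by omega)]
  refine Sum.elim_injective.mpr ⟨fun i j hij => ?_, fun i j hij => ?_, fun i j hij => ?_⟩ <;>
    have hij := congrArg ZMod.val hij <;>
    simp only [hlo, hhi] at hij <;>
    omega

lemma natCast_add_self_eq_zero {n m : ℕ} (hn : n = 2 * m) : (m : ZMod n) + m = 0 := by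
  have h : ((2 * m : ℕ) : ZMod n) = 0 := by rw [← hn, ZMod.natCast_self]
  push_cast at h
  linear_combination h

lemma val_add_eq_or {n : ℕ} [NeZero n] (a b : ZMod n) :
    (a + b).val = a.val + b.val ∨ (a + b).val + n = a.val + b.val := by
  rcases lt_or_ge (a.val + b.val) n with h | h
  · exact .inl (ZMod.val_add_of_lt h)
  · exact .inr (ZMod.val_add_val_of_le h).symm

variable {n : ℕ}

/-- The circle of positions is cut between `n - 1` and `0`. For chords with four distinct
endpoints, "exactly one endpoint of `{r, t}` lies strictly inside the interval spanned by
`{p, q}`" does not depend on where the circle is cut. -/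
def Between (p q x : ZMod n) : Prop := min p.val q.val < x.val ∧ x.val < max p.val q.val

instance (p q x : ZMod n) : Decidable (Between p q x) := inferInstanceAs (Decidable (_ ∧ _))

def Crossing (p q r t : ZMod n) : Prop := Xor (Between p q r) (Between p q t)

instance (p q r t : ZMod n) : Decidable (Crossing p q r t) :=
  inferInstanceAs (Decidable (Xor _ _))

lemma crossing_comm [NeZero n] {p q r t : ZMod n} (hpr : p ≠ r) (hpt : p ≠ t) (hqr : q ≠ r) (hqt : q ≠ t) :
    Crossing p q r t ↔ Crossing r t p q := by
  have := (ZMod.val_injective n).ne hpr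
  have := (ZMod.val_injective n).ne hpt
  have := (ZMod.val_injective n).ne hqr
  have := (ZMod.val_injective n).ne hqt
  simp only [Crossing, Between, xor_iff_not_iff]
  omega

lemma between_swap_iff [NeZero n] {p q k : ZMod n} (hp : p ∉ ({k, k + 1} : Set (ZMod n)))
    (hq : q ∉ ({k, k + 1} : Set (ZMod n))) (x : ZMod n) :
    Between p q (swap k (k + 1) x) ↔ Between p q x := by
  suffices h : Between p q (k + 1) ↔ Between p q k by
    rcases eq_or_ne x k with rfl | hxk
    · rw [swap_apply_left, h]
    rcases eq_or_ne x (k + 1) with rfl | hxk'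
    · rw [swap_apply_right, h]
    · rw [swap_apply_of_ne_of_ne hxk hxk']
  simp only [Set.mem_insert_iff, Set.mem_singleton_iff, not_or] at hp hq
  have := (ZMod.val_injective n).ne hp.1
  have := (ZMod.val_injective n).ne hp.2
  have := (ZMod.val_injective n).ne hq.1
  have := (ZMod.val_injective n).ne hq.2
  have : (1 : ZMod n).val ≤ 1 := ZMod.val_one_eq_one_mod n ▸ Nat.mod_le 1 n
  have := val_add_eq_or k 1
  have := ZMod.val_lt k
  have := ZMod.val_lt (k + 1)
  have := ZMod.val_lt p
  have := ZMod.val_lt q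
  simp only [Between]
  omega

lemma crossing_swap_iff_of_left [NeZero n] {p q k : ZMod n}
    (hp : p ∉ ({k, k + 1} : Set (ZMod n))) (hq : q ∉ ({k, k + 1} : Set (ZMod n))) (r t : ZMod n) :
    Crossing (swap k (k + 1) p) (swap k (k + 1) q) (swap k (k + 1) r) (swap k (k + 1) t) ↔
      Crossing p q r t := by
  obtain ⟨hpk, hpk'⟩ : p ≠ k ∧ p ≠ k + 1 := by simpa [not_or] using hp
  obtain ⟨hqk, hqk'⟩ : q ≠ k ∧ q ≠ k + 1 := by simpa [not_or] using hq
  unfold Crossing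
  rw [swap_apply_of_ne_of_ne hpk hpk', swap_apply_of_ne_of_ne hqk hqk', between_swap_iff hp hq,
    between_swap_iff hp hq]

lemma crossing_swap_iff_of_right [NeZero n] {r t k : ZMod n}
    (hr : r ∉ ({k, k + 1} : Set (ZMod n))) (ht : t ∉ ({k, k + 1} : Set (ZMod n))) {p q : ZMod n}
    (hpr : p ≠ r) (hpt : p ≠ t) (hqr : q ≠ r) (hqt : q ≠ t) :
    Crossing (swap k (k + 1) p) (swap k (k + 1) q) (swap k (k + 1) r) (swap k (k + 1) t) ↔
      Crossing p q r t := by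
  have hs := (swap k (k + 1)).injective
  rw [crossing_comm (hs.ne hpr) (hs.ne hpt) (hs.ne hqr) (hs.ne hqt), crossing_comm hpr hpt hqr hqt,
    crossing_swap_iff_of_left hr ht]

section Chords

variable {ι : Type*} [LinearOrder ι] [Fintype ι]

def crossingCount (p q : ι → ZMod n) : ℕ :=
  #{ij : ι × ι | ij.1 < ij.2 ∧ Crossing (p ij.1) (q ij.1) (p ij.2) (q ij.2)}

lemma crossingCount_swap_le [NeZero n] {p q : ι → ZMod n} (hpq : Injective (Sum.elim p q))
    (k : ZMod n) :
    crossingCount (swap k (k + 1) ∘ p) (swap k (k + 1) ∘ q) ≤ crossingCount p q + 1 := by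
  classical
  set K : Set (ZMod n) := {k, k + 1}
  let Touches (i : ι) : Prop := p i ∈ K ∨ q i ∈ K
  have crossing_swap_iff {i j : ι} (hij : i ≠ j) (hT : ¬(Touches i ∧ Touches j)) :
      Crossing (swap k (k + 1) (p i)) (swap k (k + 1) (q i)) (swap k (k + 1) (p j))
        (swap k (k + 1) (q j)) ↔ Crossing (p i) (q i) (p j) (q j) := by
    obtain ⟨hp, hq, hpq'⟩ := Sum.elim_injective.mp hpq
    rcases not_and_or.mp hT with hi | hj
    · exact crossing_swap_iff_of_left (not_or.mp hi).1 (not_or.mp hi).2 _ _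
    · exact crossing_swap_iff_of_right (not_or.mp hj).1 (not_or.mp hj).2 (hp.ne hij) (hpq' i j)
        (hpq' j i).symm (hq.ne hij)
  set D : Finset (ι × ι) := {ij | ij.1 < ij.2 ∧ Touches ij.1 ∧ Touches ij.2}
  calc crossingCount (swap k (k + 1) ∘ p) (swap k (k + 1) ∘ q)
      ≤ #(({ij | ij.1 < ij.2 ∧ Crossing (p ij.1) (q ij.1) (p ij.2) (q ij.2)} : Finset (ι × ι))
          ∪ D) := by
        refine card_le_card fun ij hij => ?_
        simp only [mem_filter, mem_union, mem_univ, true_and, comp_apply] at hij ⊢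
        obtain ⟨hlt, hcross⟩ := hij
        by_cases hT : Touches ij.1 ∧ Touches ij.2
        · exact .inr (by simp [D, hlt, hT])
        · exact .inl ⟨hlt, (crossing_swap_iff hlt.ne hT).mp hcross⟩
    _ ≤ crossingCount p q + #D := card_union_le _ _
    _ ≤ crossingCount p q + 1 := by
        gcongr
        refine card_le_one.2 ?_
        rintro ⟨i, j⟩ hij ⟨i', j'⟩ hij'
        simp only [D, mem_filter, mem_univ, true_and] at hij hij'
        obtain ⟨hlt, hi, hj⟩ := hij
        obtain ⟨hlt', hi', hj'⟩ := hij'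
        rcases eq_or_eq_of_meets_pair hpq hlt.ne hi hj hi' with rfl | rfl <;>
          rcases eq_or_eq_of_meets_pair hpq hlt.ne hi hj hj' with rfl | rfl <;>
          first | rfl | order

end Chords

/-- Configuration `c` puts label `c k` at position `k`, so chord `i`, joining the labels `i` and
`i + m`, has its endpoints at the positions `c⁻¹ i` and `c⁻¹ (i + m)`. -/
def chordCrossings (m : ℕ) (c : Perm (ZMod n)) : ℕ :=
  crossingCount (fun i : Fin m => c⁻¹ (i : ℕ)) (fun i : Fin m => c⁻¹ ((i : ℕ) + m))

lemma chordCrossings_mul_swap_le [NeZero n] {m : ℕ} (h : 2 * m ≤ n) (c : Perm (ZMod n))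
    (k : ZMod n) : chordCrossings m (c * swap k (k + 1)) ≤ chordCrossings m c + 1 := by
  have hc := (c⁻¹).injective.comp (labels_injective h)
  rw [Sum.comp_elim] at hc
  rw [chordCrossings, chordCrossings, mul_inv_rev, swap_inv]
  exact crossingCount_swap_le hc k

lemma chordCrossings_mul_prod_le [NeZero n] {m : ℕ} (h : 2 * m ≤ n) (c : Perm (ZMod n))
    {l : List (Perm (ZMod n))} (hl : ∀ τ ∈ l, ∃ k : ZMod n, τ = swap k (k + 1)) :
    chordCrossings m (c * l.prod) ≤ chordCrossings m c + l.length := by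
  induction l generalizing c with
  | nil => simp
  | cons τ l ih =>
    obtain ⟨k, rfl⟩ := hl τ List.mem_cons_self
    calc chordCrossings m (c * (swap k (k + 1) :: l).prod)
        = chordCrossings m (c * swap k (k + 1) * l.prod) := by rw [List.prod_cons, mul_assoc]
      _ ≤ chordCrossings m (c * swap k (k + 1)) + l.length :=
          ih _ fun τ hτ => hl τ (List.mem_cons_of_mem _ hτ)
      _ ≤ chordCrossings m c + (swap k (k + 1) :: l).length := by
          grw [chordCrossings_mul_swap_le h]
          simp only [List.length_cons]
          omega

lemma chordCrossings_eq_zero {m : ℕ} (hn : n = 2 * m) {σ : Perm (ZMod n)}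
    (hσ : ∀ i : ZMod n, σ i = if i.val < m then i else ((3 * m - 1 - i.val : ℕ) : ZMod n)) :
    chordCrossings m σ = 0 := by
  have hval (a : ℕ) (ha : a < n) : (a : ZMod n).val = a := ZMod.val_cast_of_lt ha
  have hlo (i : Fin m) : σ⁻¹ (i : ℕ) = (i : ℕ) := by
    rw [Perm.inv_eq_iff_eq, hσ, hval _ (by omega), if_pos i.isLt]
  have hhi (i : Fin m) : σ⁻¹ ((i : ℕ) + m) = ((2 * m - 1 - i : ℕ) : ZMod n) := by
    rw [Perm.inv_eq_iff_eq, hσ, hval _ (by omega), if_neg (by omega), ← Nat.cast_add]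
    congr 1
    omega
  rw [chordCrossings, crossingCount, card_eq_zero, filter_eq_empty_iff]
  rintro ⟨i, j⟩ - ⟨hij, hcross⟩
  dsimp only at hij hcross
  rw [hlo, hlo, hhi, hhi] at hcross
  simp (disch := omega) only [Crossing, Between, ZMod.val_natCast, Nat.mod_eq_of_lt,
    xor_iff_not_iff] at hcross
  omega

lemma crossing_add_half [NeZero n] {m : ℕ} (hn : n = 2 * m) {x y : ZMod n} (hxy : x ≠ y)
    (hxy' : x ≠ y + m) : Crossing x (x + m) y (y + m) := by
  have hyx : x + m ≠ y := fun h => hxy' (by linear_combination h - natCast_add_self_eq_zero hn)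
  have hm : (m : ZMod n).val = m := ZMod.val_cast_of_lt (by have := NeZero.pos n; omega)
  have := (ZMod.val_injective n).ne hxy
  have := (ZMod.val_injective n).ne hxy'
  have := (ZMod.val_injective n).ne hyx
  have := val_add_eq_or x m
  have := val_add_eq_or y m
  have := ZMod.val_lt x
  have := ZMod.val_lt y
  have := ZMod.val_lt (x + m : ZMod n)
  have := ZMod.val_lt (y + m : ZMod n)
  simp only [Crossing, Between, xor_iff_not_iff]
  omega

lemma chordCrossings_eq_choose_two [NeZero n] {m : ℕ} (hn : n = 2 * m) {c : Perm (ZMod n)}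
    (hc : ∀ x, c (x + m) = c x + m) : chordCrossings m c = m.choose 2 := by
  have hc' (x : ZMod n) : c⁻¹ (x + m) = c⁻¹ x + m := by
    rw [Perm.inv_eq_iff_eq, hc]
    simp
  obtain ⟨hlo, -, hlohi⟩ := Sum.elim_injective.mp (labels_injective hn.ge)
  calc chordCrossings m c = #{ij : Fin m × Fin m | ij.1 < ij.2} := by
        refine congrArg card (filter_congr fun ij _ => and_iff_left_of_imp fun hlt => ?_)
        dsimp only
        rw [hc', hc']
        refine crossing_add_half hn ((c⁻¹).injective.ne (hlo.ne hlt.ne)) ?_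
        rw [← hc']
        exact (c⁻¹).injective.ne (hlohi _ _)
    _ = m.choose 2 := by rw [Fintype.card_product_filter_lt, Fintype.card_fin]

lemma apply_add_natCast_of_rotation_or_reflection {m : ℕ} (hn : n = 2 * m) {c : Perm (ZMod n)}
    (hc : ∃ r : ZMod n, (∀ i, c i = i + r) ∨ (∀ i, c i = r - i)) (x : ZMod n) :
    c (x + m) = c x + m := by
  obtain ⟨r, h | h⟩ := hc <;> simp only [h]
  · ring
  · linear_combination -natCast_add_self_eq_zero hn

end CyclicSwap

open CyclicSwap in
theorem cyclic_adjacent_swap_lower_bound_general (m : ℕ) (n : ℕ) (hn : n = 2 * m)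
    [NeZero n] (σ : Equiv.Perm (ZMod n))
    (hσ : ∀ i : ZMod n,
      σ i = if (i.val : ℕ) < m then i else ((3 * m - 1 - i.val : ℕ) : ZMod n))
    (l : List (Equiv.Perm (ZMod n)))
    (hl : ∀ τ ∈ l, ∃ k : ZMod n, τ = Equiv.swap k (k + 1))
    (hfinal : ∃ r : ZMod n,
      (∀ i : ZMod n, (σ * l.prod) i = i + r) ∨ (∀ i : ZMod n, (σ * l.prod) i = r - i)) :
    Nat.choose m 2 ≤ l.length :=
  calc m.choose 2
      = chordCrossings m (σ * l.prod) :=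
        (chordCrossings_eq_choose_two hn
          (apply_add_natCast_of_rotation_or_reflection hn hfinal)).symm
    _ ≤ chordCrossings m σ + l.length := chordCrossings_mul_prod_le hn.ge σ hl
    _ = l.length := by rw [chordCrossings_eq_zero hn hσ, zero_add]

/-- The lower bound construction for Swap Planarity on an `n`-cycle, `n = 2m`:
the configuration listing `p₁,…,p_m` followed by `p_n,…,p_{m+1}` needs at least
`C(m,2)` cyclic adjacent transpositions to reach a rotation or reflection of the
identity cyclic order. Positions and labels are indexed by `ZMod n`; a cyclic
adjacent transposition exchanges the contents of cyclically consecutive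
positions `k` and `k+1`, i.e. the configuration `c` becomes `c * Equiv.swap k (k+1)`. -/
theorem cyclic_adjacent_swap_lower_bound (m : ℕ) (hm : 2 ≤ m) (n : ℕ) (hn : n = 2 * m)
    [NeZero n] (σ : Equiv.Perm (ZMod n))
    (hσ : ∀ i : ZMod n,
      σ i = if (i.val : ℕ) < m then i else ((3 * m - 1 - i.val : ℕ) : ZMod n))
    (l : List (Equiv.Perm (ZMod n)))
    (hl : ∀ τ ∈ l, ∃ k : ZMod n, τ = Equiv.swap k (k + 1))
    (hfinal : ∃ r : ZMod n,
      (∀ i : ZMod n, (σ * l.prod) i = i + r) ∨ (∀ i : ZMod n, (σ * l.prod) i = r - i)) :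
    Nat.choose m 2 ≤ l.length :=
  cyclic_adjacent_swap_lower_bound_general m n hn σ hσ l hl hfinal
end

section
/- In a connected graph G on vertex set V with |V| = n, for any target bijection f : V → V, there is a sequence of at most n(n-1)/2 swaps along edges of G (each swap exchanging the current labels at the two endpoints of an edge) transforming the identity labeling into f. -/
/-!
Induct on the number of vertices. A finite connected graph with at least two vertices has a
vertex `v` whose removal leaves it connected (a leaf of a spanning tree). Swapping along a path
from `v` to `f v` (fewer than `n` edges) brings the right label to `v`; what remains is a
permutation fixing `v`, i.e. a permutation of the connected graph `G - v`, which needs at most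
`(n - 1).choose 2` further swaps. Since `(n - 1) + (n - 1).choose 2 = n.choose 2`, we are done.
-/

open Equiv

namespace SimpleGraph

variable {V : Type*} [DecidableEq V]

def IsEdgeSwap (G : SimpleGraph V) (τ : Perm V) : Prop :=
  ∃ u v : V, G.Adj u v ∧ τ = swap u v

variable {G : SimpleGraph V}

lemma IsEdgeSwap.ofSubtype {s : Set V} [DecidablePred (· ∈ s)] {τ : Perm s}
    (hτ : (G.induce s).IsEdgeSwap τ) : G.IsEdgeSwap (Perm.ofSubtype τ) := by
  obtain ⟨u, v, huv, rfl⟩ := hτ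
  exact ⟨u, v, huv, Perm.ofSubtype_swap_eq u v⟩

lemma Walk.exists_edgeSwaps_prod_apply {a b : V} (p : G.Walk a b) :
    ∃ l : List (Perm V), (∀ τ ∈ l, G.IsEdgeSwap τ) ∧ l.prod a = b ∧ l.length = p.length := by
  induction p with
  | nil => exact ⟨[], by simp, rfl, rfl⟩
  | @cons u x _ hux _ ih =>
    obtain ⟨l, hl, hprod, hlen⟩ := ih
    refine ⟨l ++ [swap u x], ?_, ?_, by simp [hlen]⟩
    · simpa [or_imp, forall_and] using ⟨hl, u, x, hux, rfl⟩
    · simpa using hprod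

lemma Connected.exists_edgeSwaps_prod_apply [Fintype V] (hG : G.Connected) (a b : V) :
    ∃ l : List (Perm V), (∀ τ ∈ l, G.IsEdgeSwap τ) ∧ l.prod a = b ∧
      l.length < Fintype.card V := by
  obtain ⟨p, hp⟩ := hG.exists_isPath a b
  obtain ⟨l, hl, hprod, hlen⟩ := p.exists_edgeSwaps_prod_apply
  exact ⟨l, hl, hprod, hlen ▸ hp.length_lt⟩

lemma exists_edgeSwaps_prod_eq_of_apply_eq_self {v : V} {g : Perm V} (hgv : g v = v) {k : ℕ}
    (h : ∀ g' : Perm ({v}ᶜ : Set V), ∃ l : List (Perm ({v}ᶜ : Set V)),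
      (∀ τ ∈ l, (G.induce {v}ᶜ).IsEdgeSwap τ) ∧ l.prod = g' ∧ l.length ≤ k) :
    ∃ l : List (Perm V), (∀ τ ∈ l, G.IsEdgeSwap τ) ∧ l.prod = g ∧ l.length ≤ k := by
  have hmem : ∀ x, g x ∈ ({v}ᶜ : Set V) ↔ x ∈ ({v}ᶜ : Set V) := fun x =>
    (g.injective.eq_iff' hgv).not
  obtain ⟨l, hl, hprod, hlen⟩ := h (g.subtypePerm hmem)
  refine ⟨l.map Perm.ofSubtype, ?_, ?_, by simpa using hlen⟩
  · simpa using fun τ hτ => (hl τ hτ).ofSubtype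
  · rw [← map_list_prod, hprod]
    exact Perm.ofSubtype_subtypePerm hmem fun x hx hxv => hx (by rw [hxv, hgv])

theorem Connected.exists_edgeSwaps_prod_eq [Fintype V] (hG : G.Connected) (f : Perm V) :
    ∃ l : List (Perm V), (∀ τ ∈ l, G.IsEdgeSwap τ) ∧ l.prod = f ∧
      l.length ≤ (Fintype.card V).choose 2 := by
  refine Fintype.induction_subsingleton_or_nontrivial
    (P := fun V _ => ∀ [DecidableEq V] {G : SimpleGraph V}, G.Connected → ∀ f : Perm V,
      ∃ l : List (Perm V), (∀ τ ∈ l, G.IsEdgeSwap τ) ∧ l.prod = f ∧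
        l.length ≤ (Fintype.card V).choose 2) V ?_ ?_ hG f
  · intro V _ _ _ G _ f
    exact ⟨[], by simp, Subsingleton.elim _ _, Nat.zero_le _⟩
  · intro V _ _ ih _ G hG f
    obtain ⟨v, hv⟩ := hG.exists_connected_induce_compl_singleton_of_finite_nontrivial
    obtain ⟨l₁, hl₁, hl₁v, hl₁len⟩ := hG.exists_edgeSwaps_prod_apply v (f v)
    have hcard : Fintype.card ({v}ᶜ : Set V) + 1 = Fintype.card V := by
      rw [Fintype.card_compl_set, Set.card_singleton]
      exact Nat.sub_add_cancel Fintype.card_pos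
    obtain ⟨l₂, hl₂, hl₂prod, hl₂len⟩ :=
      exists_edgeSwaps_prod_eq_of_apply_eq_self (g := l₁.prod⁻¹ * f)
        (by simp [← hl₁v]) (ih _ (by omega) hv)
    refine ⟨l₁ ++ l₂, ?_, by simp [hl₂prod], ?_⟩
    · simpa [or_imp, forall_and] using ⟨hl₁, hl₂⟩
    · rw [← hcard, Nat.choose_succ_succ', Nat.choose_one_right, List.length_append]
      exact Nat.add_le_add (by omega) hl₂len

end SimpleGraph

/-- Token swapping upper bound: in a connected graph on `n` vertices, any target
bijection can be reached from the identity labeling by at most `n(n-1)/2` swaps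
along edges. -/
theorem token_swapping_upper_bound {V : Type*} [Fintype V] [DecidableEq V]
    (G : SimpleGraph V) (hG : G.Connected) (f : Equiv.Perm V) :
    ∃ l : List (Equiv.Perm V),
      (∀ τ ∈ l, ∃ u v : V, G.Adj u v ∧ τ = Equiv.swap u v) ∧
      l.prod = f ∧
      l.length ≤ Fintype.card V * (Fintype.card V - 1) / 2 := by
  rw [← Nat.choose_two_right]
  exact hG.exists_edgeSwaps_prod_eq f
end
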